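/- Let A ∈ {0,1}^{m×n}, let e ∈ ℝ^m be the all-ones vector, let S = {x ∈ {0,1}^n : Ax ≥ e}, and let φ := ⋀_{i=1}^m ⋁_{j : A_{ij}=1} x_j be the canonical monotone CNF formula for S (assume each row of A is nonzero). Then for every k ∈ ℤ≥1: every monotone inequality in standard form of pitch at most k that is valid for S is valid for φ^k([0,1]^n), and if φ^k([0,1]^n) ≠ ∅ then xc(φ^k([0,1]^n)) ≤ 2n · (mn)^k. -/

import Mathlib

/-- Reduced Boolean formulas: literals combined with `∧` and `∨`. -/
inductive Fml (n : ℕ) : Type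
  | pos : Fin n → Fml n
  | neg : Fin n → Fml n
  | and : Fml n → Fml n → Fml n
  | or  : Fml n → Fml n → Fml n

namespace Fml

/-- The size of a formula: the number of occurrences of literals. -/
def size {n : ℕ} : Fml n → ℕ
  | pos _ => 1
  | neg _ => 1
  | and φ ψ => φ.size + ψ.size
  | or φ ψ => φ.size + ψ.size

/-- The set `φ(Q)` obtained by feeding the convex set `Q` into the formula `φ`. -/
def app {n : ℕ} : Fml n → Set (Fin n → ℝ) → Set (Fin n → ℝ)
  | pos i, Q => {x ∈ Q | x i = 1}
  | neg i, Q => {x ∈ Q | x i = 0}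
  | and φ ψ, Q => φ.app Q ∩ ψ.app Q
  | or φ ψ, Q => convexHull ℝ (φ.app Q ∪ ψ.app Q)

/-- Iterated application: `φ^0(Q) = Q` and `φ^{ℓ+1}(Q) = φ(φ^ℓ(Q))`. -/
def iterApp {n : ℕ} (φ : Fml n) : ℕ → Set (Fin n → ℝ) → Set (Fin n → ℝ)
  | 0, Q => Q
  | k + 1, Q => φ.app (φ.iterApp k Q)

end Fml

/-- The disjunction `x_{j₁} ∨ ⋯ ∨ x_{j_r}` of the variables listed in a list
(the default `d` is only used for the empty list). -/
def bigOr {n : ℕ} (d : Fml n) : List (Fin n) → Fml n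
  | [] => d
  | [j] => Fml.pos j
  | j :: j' :: l => Fml.or (Fml.pos j) (bigOr d (j' :: l))

/-- The conjunction of a list of formulas (the default `d` is only used for the
empty list). -/
def bigAnd {n : ℕ} (d : Fml n) : List (Fml n) → Fml n
  | [] => d
  | [ψ] => ψ
  | ψ :: ψ' :: l => Fml.and ψ (bigAnd d (ψ' :: l))

open Classical in
/-- The canonical monotone CNF formula `⋀_{i=1}^m ⋁_{j : A i j = 1} x_j`
associated with a 0/1 matrix `A`. -/
noncomputable def canonCNF {m n : ℕ} (hn : 0 < n) (A : Matrix (Fin m) (Fin n) ℝ) :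
    Fml n :=
  bigAnd (Fml.pos ⟨0, hn⟩)
    (((Finset.univ : Finset (Fin m)).sort (· ≤ ·)).map fun i =>
      bigOr (Fml.pos ⟨0, hn⟩)
        ((Finset.univ.filter fun j => A i j = 1).sort (· ≤ ·)))

/-- The 0/1 points of the cube. -/
def CubeVerts (n : ℕ) : Set (Fin n → ℝ) := {x | ∀ i, x i = 0 ∨ x i = 1}

/-- The inequality `∑ c i * x i ≥ δ` has pitch at most `p`. -/
def PitchLE {n : ℕ} (c : Fin n → ℝ) (δ : ℝ) (p : ℕ) : Prop :=
  ∀ J : Finset (Fin n), (∀ j ∈ J, c j ≠ 0) → p ≤ J.card → δ ≤ ∑ j ∈ J, c j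

/-- `P` admits an extended formulation of size `m`. -/
def IsEF {n : ℕ} (P : Set (Fin n → ℝ)) (m : ℕ) : Prop :=
  ∃ (d : ℕ) (T : Matrix (Fin n) (Fin d) ℝ) (A : Matrix (Fin m) (Fin d) ℝ)
    (t : Fin n → ℝ) (b : Fin m → ℝ),
    P = {x | ∃ y : Fin d → ℝ, (∀ i, b i ≤ A.mulVec y i) ∧ x = T.mulVec y + t}

/-- Extension complexity: the smallest size of an extended formulation of `P`. -/
noncomputable def xc {n : ℕ} (P : Set (Fin n → ℝ)) : ℕ := sInf {m | IsEF P m}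

/-!
Validity is proved by induction on `k`. When `δ > 0`, some clause of `φ` contains only
variables `x_j` with `c_j > 0`: otherwise the indicator of `{c = 0}` would be a cover violating
the inequality. A point of `φ^{k+1}(Q)` lies in the convex hull of points of `φ^k(Q)` having
`x_j = 1` for some `j` in that clause, and at such a point the inequality follows from the one
with `c_j` replaced by `0` and `δ` by `δ - c_j`, whose pitch is at most `k`.

For the extension complexity we carry, for every face `{x_J = 1}` of the cube, an extended
formulation of `φ^k([0,1]^n) ∩ {x_J = 1}` as the height-one slice of a projected polyhedral cone
lying in the cone over that face (Balas' homogenisation). Such cones combine by intersection for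
`∧` and by Minkowski sum for `∨`, with sizes adding up; the sum describes the convex hull of the
union because lying in the cone over the face forces `x = 0` at height `0`. A variable `x_i` only
moves to a smaller face, and since faces are extreme, intersecting with a face commutes with
convex hulls. So one application of `φ` multiplies the size by at most `|φ| ≤ mn`, starting from
`2n` for the faces of the cube when `n ≥ 2`; for `n = 1` the iterate is the single point `1`.
-/

open Set
open scoped Pointwise

namespace Fml

variable {n : ℕ}

def IsMonotone : Fml n → Prop
  | pos _ => True
  | neg _ => False
  | and φ ψ => φ.IsMonotone ∧ ψ.IsMonotone
  | or φ ψ => φ.IsMonotone ∧ ψ.IsMonotone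

variable {Q : Set (Fin n → ℝ)}

theorem app_subset (ψ : Fml n) (hQ : Convex ℝ Q) : ψ.app Q ⊆ Q := by
  induction ψ with
  | pos i => exact sep_subset _ _
  | neg i => exact sep_subset _ _
  | and φ ψ ihφ _ => exact inter_subset_left.trans ihφ
  | or φ ψ ihφ ihψ => exact convexHull_min (union_subset ihφ ihψ) hQ

theorem convex_app (ψ : Fml n) (hQ : Convex ℝ Q) : Convex ℝ (ψ.app Q) := by
  induction ψ with
  | pos i => exact hQ.inter (convex_hyperplane (LinearMap.proj (R := ℝ) i).isLinear 1)
  | neg i => exact hQ.inter (convex_hyperplane (LinearMap.proj (R := ℝ) i).isLinear 0)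
  | and φ ψ ihφ ihψ => exact ihφ.inter ihψ
  | or φ ψ _ _ => exact convex_convexHull ℝ _

theorem convex_iterApp (ψ : Fml n) (hQ : Convex ℝ Q) : ∀ k, Convex ℝ (ψ.iterApp k Q)
  | 0 => hQ
  | k + 1 => ψ.convex_app (ψ.convex_iterApp hQ k)

theorem iterApp_subset (ψ : Fml n) (hQ : Convex ℝ Q) : ∀ k, ψ.iterApp k Q ⊆ Q
  | 0 => subset_rfl
  | k + 1 => (ψ.app_subset (ψ.convex_iterApp hQ k)).trans (ψ.iterApp_subset hQ k)

theorem one_mem_app {ψ : Fml n} (hψ : ψ.IsMonotone) (hQ : 1 ∈ Q) : 1 ∈ ψ.app Q := by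
  induction ψ with
  | pos i => exact ⟨hQ, rfl⟩
  | neg i => exact hψ.elim
  | and φ ψ ihφ ihψ => exact ⟨ihφ hψ.1, ihψ hψ.2⟩
  | or φ ψ ihφ _ => exact subset_convexHull ℝ _ (Or.inl (ihφ hψ.1))

theorem one_mem_iterApp {ψ : Fml n} (hψ : ψ.IsMonotone) (hQ : 1 ∈ Q) :
    ∀ k, 1 ∈ ψ.iterApp k Q
  | 0 => hQ
  | k + 1 => one_mem_app hψ (one_mem_iterApp hψ hQ k)

end Fml

section CNF

variable {n : ℕ}

theorem app_bigAnd_subset (d : Fml n) (Q : Set (Fin n → ℝ)) :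
    ∀ {L : List (Fml n)} {ψ : Fml n}, ψ ∈ L → (bigAnd d L).app Q ⊆ ψ.app Q
  | [_], _, h => by rw [List.mem_singleton.1 h]; rfl
  | _ :: _ :: _, _, h => by
    rcases List.mem_cons.1 h with rfl | h
    · exact inter_subset_left
    · exact inter_subset_right.trans (app_bigAnd_subset d Q h)

theorem app_bigOr_subset (d : Fml n) (Q : Set (Fin n → ℝ)) :
    ∀ {l : List (Fin n)}, l ≠ [] →
      (bigOr d l).app Q ⊆ convexHull ℝ {y ∈ Q | ∃ j ∈ l, y j = 1}
  | [j], _ => fun y hy => subset_convexHull ℝ _ ⟨hy.1, j, List.mem_singleton_self j, hy.2⟩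
  | j :: j' :: l, _ => by
    refine convexHull_min (union_subset ?_ ?_) (convex_convexHull ℝ _)
    · exact fun y hy => subset_convexHull ℝ _ ⟨hy.1, j, List.mem_cons_self, hy.2⟩
    · refine (app_bigOr_subset d Q (List.cons_ne_nil j' l)).trans (convexHull_mono ?_)
      rintro y ⟨hyQ, i, hi, hyi⟩
      exact ⟨hyQ, i, List.mem_cons_of_mem j hi, hyi⟩

theorem isMonotone_bigOr (j₀ : Fin n) : ∀ l : List (Fin n), (bigOr (Fml.pos j₀) l).IsMonotone
  | [] | [_] => trivial
  | _ :: j' :: l => ⟨trivial, isMonotone_bigOr j₀ (j' :: l)⟩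

theorem isMonotone_bigAnd {d : Fml n} (hd : d.IsMonotone) :
    ∀ {L : List (Fml n)}, (∀ ψ ∈ L, ψ.IsMonotone) → (bigAnd d L).IsMonotone
  | [], _ => hd
  | [ψ], h => h ψ (List.mem_singleton_self ψ)
  | ψ :: _ :: _, h => ⟨h ψ List.mem_cons_self,
      isMonotone_bigAnd hd fun φ hφ => h φ (List.mem_cons_of_mem ψ hφ)⟩

theorem size_bigOr (j₀ : Fin n) : ∀ l : List (Fin n), (bigOr (Fml.pos j₀) l).size = max 1 l.length
  | [] | [_] => rfl
  | j :: j' :: l => by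
    simp only [bigOr, Fml.size, size_bigOr j₀ (j' :: l), List.length_cons]
    omega

theorem size_bigAnd_le (d : Fml n) {b : ℕ} :
    ∀ {L : List (Fml n)}, L ≠ [] → (∀ ψ ∈ L, ψ.size ≤ b) → (bigAnd d L).size ≤ L.length * b
  | [ψ], _, h => by simpa [bigAnd] using h ψ (List.mem_singleton_self ψ)
  | ψ :: ψ' :: L, _, h => by
    have hrest := size_bigAnd_le d (List.cons_ne_nil ψ' L)
      fun φ hφ => h φ (List.mem_cons_of_mem ψ hφ)
    simp only [bigAnd, Fml.size, List.length_cons] at hrest ⊢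
    linarith [h ψ List.mem_cons_self]

variable {m : ℕ} (hn : 0 < n) (A : Matrix (Fin m) (Fin n) ℝ)

theorem isMonotone_canonCNF : (canonCNF hn A).IsMonotone := by
  refine isMonotone_bigAnd (d := Fml.pos _) trivial fun ψ hψ => ?_
  obtain ⟨i, -, rfl⟩ := List.mem_map.1 hψ
  exact isMonotone_bigOr _ _

theorem size_canonCNF_le (hm : 0 < m) : (canonCNF hn A).size ≤ m * n := by
  classical
  unfold canonCNF
  refine (size_bigAnd_le (b := n) _ ?_ fun ψ hψ => ?_).trans_eq (by simp)
  · simpa [← List.length_pos_iff] using hm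
  · obtain ⟨i, -, rfl⟩ := List.mem_map.1 hψ
    rw [size_bigOr, Finset.length_sort]
    exact max_le hn (card_finset_fin_le _)

theorem app_canonCNF_subset (hrow : ∀ i, ∃ j, A i j = 1) (Q : Set (Fin n → ℝ)) (i : Fin m) :
    (canonCNF hn A).app Q ⊆ convexHull ℝ {y ∈ Q | ∃ j, A i j = 1 ∧ y j = 1} := by
  classical
  unfold canonCNF
  refine (app_bigAnd_subset _ Q (List.mem_map_of_mem (by simp : i ∈ _))).trans ?_
  obtain ⟨j, hj⟩ := hrow i
  refine (app_bigOr_subset _ Q (List.ne_nil_of_mem (a := j) (by simp [hj]))).trans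
    (convexHull_mono ?_)
  rintro y ⟨hyQ, j, hj, hyj⟩
  exact ⟨hyQ, j, by simpa using hj, hyj⟩

end CNF

section Pitch

variable {m n : ℕ}

def coverPoints (A : Matrix (Fin m) (Fin n) ℝ) : Set (Fin n → ℝ) :=
  {x | x ∈ CubeVerts n ∧ ∀ i, 1 ≤ ∑ j, A i j * x j}

theorem sum_mul_update_zero (c x : Fin n → ℝ) (j : Fin n) :
    ∑ l, c l * x l = c j * x j + ∑ l, Function.update c j 0 l * x l := by
  simp [Function.update_apply, ite_mul, Finset.sum_ite, Finset.filter_ne']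

theorem convex_halfSpace_sum_ge (c : Fin n → ℝ) (δ : ℝ) :
    Convex ℝ {x : Fin n → ℝ | δ ≤ ∑ l, c l * x l} :=
  convex_halfSpace_ge ⟨fun x y => by simp [mul_add, Finset.sum_add_distrib],
    fun r x => by simp [Finset.mul_sum, mul_left_comm]⟩ δ

theorem PitchLE.update_zero {c : Fin n → ℝ} {δ : ℝ} {k : ℕ} (hp : PitchLE c δ (k + 1))
    {j : Fin n} (hj : c j ≠ 0) : PitchLE (Function.update c j 0) (δ - c j) k := by
  intro J hJ hk
  have hjJ : j ∉ J := fun h => hJ j h (Function.update_self j 0 c)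
  have hcJ : ∀ l ∈ J, Function.update c j 0 l = c l := fun l hl =>
    Function.update_of_ne (ne_of_mem_of_not_mem hl hjJ) 0 c
  have hins := hp (insert j J) (fun l hl => by
      rcases Finset.mem_insert.1 hl with rfl | hl
      · exact hj
      · exact hcJ l hl ▸ hJ l hl)
    (by rw [Finset.card_insert_of_notMem hjJ]; omega)
  rw [Finset.sum_insert hjJ] at hins
  rw [Finset.sum_congr rfl hcJ]
  linarith

theorem exists_row_forall_ne_zero {A : Matrix (Fin m) (Fin n) ℝ}
    (hA01 : ∀ i j, A i j = 0 ∨ A i j = 1) {c : Fin n → ℝ} {δ : ℝ} (hδ : 0 < δ)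
    (hS : ∀ x ∈ coverPoints A, δ ≤ ∑ l, c l * x l) : ∃ i, ∀ j, A i j = 1 → c j ≠ 0 := by
  by_contra! h
  choose j hj1 hj0 using h
  let x : Fin n → ℝ := fun l => if c l = 0 then 1 else 0
  have hx01 : ∀ l, x l = 0 ∨ x l = 1 := fun l => by by_cases h : c l = 0 <;> simp [x, h]
  have hx : x ∈ coverPoints A := by
    refine ⟨hx01, fun i => ?_⟩
    calc (1 : ℝ) = A i (j i) * x (j i) := by simp [x, hj1, hj0]
      _ ≤ ∑ l, A i l * x l := Finset.single_le_sum (f := fun l => A i l * x l)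
          (fun l _ => mul_nonneg ((hA01 i l).elim (·.ge) (· ▸ zero_le_one))
            ((hx01 l).elim (·.ge) (· ▸ zero_le_one))) (Finset.mem_univ _)
  have hzero : ∑ l, c l * x l = 0 :=
    Finset.sum_eq_zero fun l _ => by by_cases h : c l = 0 <;> simp [x, h]
  linarith [hS x hx]

theorem le_sum_of_mem_iterApp_canonCNF (hn : 0 < n) (A : Matrix (Fin m) (Fin n) ℝ)
    (hA01 : ∀ i j, A i j = 0 ∨ A i j = 1) (hrow : ∀ i, ∃ j, A i j = 1) (k : ℕ) :
    ∀ {c : Fin n → ℝ} {δ : ℝ}, (∀ l, 0 ≤ c l) → PitchLE c δ k →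
      (∀ x ∈ coverPoints A, δ ≤ ∑ l, c l * x l) →
      ∀ x ∈ (canonCNF hn A).iterApp k (Icc 0 1), δ ≤ ∑ l, c l * x l := by
  induction k with
  | zero =>
    intro c δ hc hp _ x hx
    have hδ : δ ≤ 0 := by simpa using hp ∅ (by simp) (by simp)
    exact hδ.trans (Finset.sum_nonneg fun l _ => mul_nonneg (hc l) (hx.1 l))
  | succ k ih =>
    intro c δ hc hp hS x hx
    rcases le_or_gt δ 0 with hδ | hδ
    · have hx01 := (canonCNF hn A).iterApp_subset (convex_Icc 0 1) _ hx
      exact hδ.trans (Finset.sum_nonneg fun l _ => mul_nonneg (hc l) (hx01.1 l))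
    obtain ⟨i, hi⟩ := exists_row_forall_ne_zero hA01 hδ hS
    refine convexHull_min ?_ (convex_halfSpace_sum_ge c δ)
      (app_canonCNF_subset hn A hrow _ i hx)
    rintro y ⟨hy, j, hAij, hyj⟩
    have hc' : ∀ l, 0 ≤ Function.update c j 0 l := fun l => by
      rcases eq_or_ne l j with rfl | hl
      · simp
      · simpa [hl] using hc l
    have hS' : ∀ x ∈ coverPoints A, δ - c j ≤ ∑ l, Function.update c j 0 l * x l := by
      intro x hx
      have hxj : x j ≤ 1 := (hx.1 j).elim (fun h => h ▸ zero_le_one) (·.le)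
      have := hS x hx
      rw [sum_mul_update_zero c x j] at this
      nlinarith [hc j]
    have := ih hc' (hp.update_zero (hi j hAij)) hS' y hy
    show δ ≤ ∑ l, c l * y l
    rw [sum_mul_update_zero c y j, hyj]
    linarith

end Pitch

section Cone

variable {E W : Type*} [AddCommGroup E] [Module ℝ E] [AddCommGroup W] [Module ℝ W]

def polyCone (L : List (Module.Dual ℝ E)) : Set E := {v | ∀ f ∈ L, 0 ≤ f v}

theorem zero_mem_polyCone (L : List (Module.Dual ℝ E)) : (0 : E) ∈ polyCone L :=
  fun f _ => (map_zero f).ge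

theorem smul_mem_polyCone {L : List (Module.Dual ℝ E)} {t : ℝ} (ht : 0 ≤ t) {v : E}
    (hv : v ∈ polyCone L) : t • v ∈ polyCone L :=
  fun f hf => by simpa using mul_nonneg ht (hv f hf)

theorem convex_polyCone (L : List (Module.Dual ℝ E)) : Convex ℝ (polyCone L) :=
  fun u hu v hv a b ha hb _ f hf => by
    simpa using add_nonneg (mul_nonneg ha (hu f hf)) (mul_nonneg hb (hv f hf))

theorem polyCone_append_map {F G : Type*} [AddCommGroup F] [Module ℝ F] [AddCommGroup G]
    [Module ℝ G] (L₁ : List (Module.Dual ℝ F)) (L₂ : List (Module.Dual ℝ G))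
    (g₁ : E →ₗ[ℝ] F) (g₂ : E →ₗ[ℝ] G) :
    polyCone (L₁.map (· ∘ₗ g₁) ++ L₂.map (· ∘ₗ g₂)) = g₁ ⁻¹' polyCone L₁ ∩ g₂ ⁻¹' polyCone L₂ := by
  ext v
  simp [polyCone, or_imp, forall_and]

variable (W) in
def HasConeEF (s : ℕ) (K : Set W) : Prop :=
  ∃ (E : Type) (_ : AddCommGroup E) (_ : Module ℝ E) (_ : FiniteDimensional ℝ E)
    (π : E →ₗ[ℝ] W) (L : List (Module.Dual ℝ E)), L.length ≤ s ∧ K = π '' polyCone L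

namespace HasConeEF

variable {s s₁ s₂ : ℕ} {K K₁ K₂ : Set W}

theorem of_polyCone {V : Type} [AddCommGroup V] [Module ℝ V] [FiniteDimensional ℝ V]
    {L : List (Module.Dual ℝ V)} (hL : L.length ≤ s) : HasConeEF V s (polyCone L) :=
  ⟨V, inferInstance, inferInstance, inferInstance, LinearMap.id, L, hL, (image_id _).symm⟩

theorem zero_mem (hK : HasConeEF W s K) : (0 : W) ∈ K := by
  obtain ⟨E, _, _, _, π, L, -, rfl⟩ := hK
  exact ⟨0, zero_mem_polyCone L, map_zero π⟩

theorem smul_mem (hK : HasConeEF W s K) {t : ℝ} (ht : 0 ≤ t) {w : W} (hw : w ∈ K) :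
    t • w ∈ K := by
  obtain ⟨E, _, _, _, π, L, -, rfl⟩ := hK
  obtain ⟨v, hv, rfl⟩ := hw
  exact ⟨t • v, smul_mem_polyCone ht hv, map_smul π t v⟩

theorem convex (hK : HasConeEF W s K) : Convex ℝ K := by
  obtain ⟨E, _, _, _, π, L, -, rfl⟩ := hK
  exact (convex_polyCone L).linear_image π

theorem add (h₁ : HasConeEF W s₁ K₁) (h₂ : HasConeEF W s₂ K₂) :
    HasConeEF W (s₁ + s₂) (K₁ + K₂) := by
  obtain ⟨E₁, _, _, _, π₁, L₁, hL₁, rfl⟩ := h₁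
  obtain ⟨E₂, _, _, _, π₂, L₂, hL₂, rfl⟩ := h₂
  refine ⟨E₁ × E₂, inferInstance, inferInstance, inferInstance, π₁.coprod π₂,
    L₁.map (· ∘ₗ LinearMap.fst ℝ E₁ E₂) ++ L₂.map (· ∘ₗ LinearMap.snd ℝ E₁ E₂),
    by simpa using Nat.add_le_add hL₁ hL₂, ?_⟩
  rw [polyCone_append_map]
  ext w
  constructor
  · rintro ⟨_, ⟨v₁, h₁, rfl⟩, _, ⟨v₂, h₂, rfl⟩, rfl⟩
    exact ⟨(v₁, v₂), ⟨h₁, h₂⟩, rfl⟩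
  · rintro ⟨⟨v₁, v₂⟩, ⟨h₁, h₂⟩, rfl⟩
    exact ⟨_, ⟨v₁, h₁, rfl⟩, _, ⟨v₂, h₂, rfl⟩, rfl⟩

theorem inter (h₁ : HasConeEF W s₁ K₁) (h₂ : HasConeEF W s₂ K₂) :
    HasConeEF W (s₁ + s₂) (K₁ ∩ K₂) := by
  obtain ⟨E₁, _, _, _, π₁, L₁, hL₁, rfl⟩ := h₁
  obtain ⟨E₂, _, _, _, π₂, L₂, hL₂, rfl⟩ := h₂
  -- pairs of preimages of a common point
  let E := LinearMap.eqLocus (π₁ ∘ₗ LinearMap.fst ℝ E₁ E₂) (π₂ ∘ₗ LinearMap.snd ℝ E₁ E₂)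
  refine ⟨E, inferInstance, inferInstance, inferInstance,
    π₁ ∘ₗ LinearMap.fst ℝ E₁ E₂ ∘ₗ E.subtype,
    L₁.map (· ∘ₗ LinearMap.fst ℝ E₁ E₂ ∘ₗ E.subtype) ++
      L₂.map (· ∘ₗ LinearMap.snd ℝ E₁ E₂ ∘ₗ E.subtype),
    by simpa using Nat.add_le_add hL₁ hL₂, ?_⟩
  rw [polyCone_append_map]
  ext w
  constructor
  · rintro ⟨⟨v₁, h₁, rfl⟩, ⟨v₂, h₂, hv⟩⟩
    exact ⟨⟨(v₁, v₂), hv.symm⟩, ⟨h₁, h₂⟩, rfl⟩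
  · rintro ⟨⟨⟨v₁, v₂⟩, hv⟩, ⟨h₁, h₂⟩, rfl⟩
    exact ⟨⟨v₁, h₁, rfl⟩, ⟨v₂, h₂, hv.symm⟩⟩

end HasConeEF

end Cone

theorem HasConeEF.isEF_slice {n s : ℕ} {K : Set ((Fin n → ℝ) × ℝ)}
    (hK : HasConeEF _ s K) (hne : ∃ x, (x, (1 : ℝ)) ∈ K) : IsEF {x | (x, (1 : ℝ)) ∈ K} s := by
  classical
  obtain ⟨E, _, _, _, π, L, hL, rfl⟩ := hK
  obtain ⟨_, v₀, -, hv₀⟩ := hne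
  set μ : Module.Dual ℝ E := LinearMap.snd ℝ _ ℝ ∘ₗ π
  have hμv₀ : μ v₀ = 1 := by simp [μ, hv₀]
  set e := (Module.finBasis ℝ E).equivFun
  -- `v ↦ (v - μ v • v₀) + v₀` retracts `E` onto the affine hyperplane `μ = 1`
  set B : (Fin (Module.finrank ℝ E) → ℝ) →ₗ[ℝ] E :=
    (LinearMap.id - μ.smulRight v₀) ∘ₗ e.symm.toLinearMap
  have hμB : ∀ y, μ (B y) = 0 := fun y => by simp [B, hμv₀]
  set G : (Fin (Module.finrank ℝ E) → ℝ) →ₗ[ℝ] Fin s → ℝ :=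
    LinearMap.pi fun r => if h : r.1 < L.length then L[r.1] ∘ₗ B else 0
  refine ⟨_, LinearMap.toMatrix' (LinearMap.fst ℝ _ ℝ ∘ₗ π ∘ₗ B), LinearMap.toMatrix' G,
    (π v₀).1, fun r => if h : r.1 < L.length then -L[r.1] v₀ else 0, ?_⟩
  ext x
  simp only [LinearMap.toMatrix'_mulVec, mem_ofPred_eq]
  constructor
  · rintro ⟨v, hv, hvx⟩
    have hμv : μ v = 1 := by simp [μ, hvx]
    have hBv : B (e v) + v₀ = v := by simp [B, hμv]
    refine ⟨e v, fun r => ?_, ?_⟩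
    · by_cases h : r.1 < L.length
      · have := hv _ (List.getElem_mem h)
        rw [← hBv, map_add] at this
        simp only [G, h, ↓reduceDIte, LinearMap.pi_apply, LinearMap.coe_comp, Function.comp_apply]
        linarith
      · simp [G, h]
    · have := congrArg (fun v => (π v).1) hBv
      simp only [map_add, Prod.fst_add, hvx] at this
      simp [this]
  · rintro ⟨y, hy, rfl⟩
    refine ⟨B y + v₀, fun f hf => ?_, ?_⟩
    · obtain ⟨r, hr, rfl⟩ := List.mem_iff_getElem.1 hf
      have := hy ⟨r, hr.trans_le hL⟩
      simp only [G, hr, ↓reduceDIte, LinearMap.pi_apply, LinearMap.coe_comp,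
        Function.comp_apply] at this
      rw [map_add]
      linarith
    · have := hμB y
      simp only [μ, LinearMap.comp_apply, LinearMap.snd_apply] at this
      ext <;> simp [this, hv₀]

theorem IsExtreme.convexHull_inter_eq {𝕜 E : Type*} [Field 𝕜] [LinearOrder 𝕜]
    [IsStrictOrderedRing 𝕜] [AddCommGroup E] [Module 𝕜 E] {A B U : Set E}
    (hAB : IsExtreme 𝕜 A B) (hA : Convex 𝕜 A) (hB : Convex 𝕜 B) (hUA : U ⊆ A) :
    convexHull 𝕜 U ∩ B = convexHull 𝕜 (U ∩ B) := by
  refine Subset.antisymm ?_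
    (subset_inter (convexHull_mono inter_subset_left) (convexHull_min inter_subset_right hB))
  let D := {x ∈ A | x ∈ B → x ∈ convexHull 𝕜 (U ∩ B)}
  have hD : Convex 𝕜 D := convex_iff_openSegment_subset.2 fun x hx y hy z hz =>
    ⟨hA.openSegment_subset hx.1 hy.1 hz, fun hzB =>
      (convex_convexHull 𝕜 _).openSegment_subset
        (hx.2 (hAB.left_mem_of_mem_openSegment hx.1 hy.1 hzB hz))
        (hy.2 (hAB.right_mem_of_mem_openSegment hx.1 hy.1 hzB hz)) hz⟩
  have hUD : U ⊆ D := fun u hu => ⟨hUA hu, fun huB => subset_convexHull 𝕜 _ ⟨hu, huB⟩⟩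
  rintro x ⟨hxU, hxB⟩
  exact (convexHull_min hUD hD hxU).2 hxB

section Face

variable {n : ℕ}

def cubeFace (J : Finset (Fin n)) : Set (Fin n → ℝ) := Icc 0 1 ∩ {x | ∀ j ∈ J, x j = 1}

def faceCone (J : Finset (Fin n)) : Set ((Fin n → ℝ) × ℝ) :=
  {p | 0 ≤ p.2 ∧ ∀ l, 0 ≤ p.1 l ∧ p.1 l ≤ p.2 ∧ (l ∈ J → p.1 l = p.2)}

theorem one_mem_cubeFace (J : Finset (Fin n)) : (1 : Fin n → ℝ) ∈ cubeFace J :=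
  ⟨⟨zero_le_one, le_rfl⟩, fun _ _ => rfl⟩

theorem cubeFace_subset_Icc (J : Finset (Fin n)) : cubeFace J ⊆ Icc 0 1 := inter_subset_left

theorem cubeFace_empty : cubeFace (∅ : Finset (Fin n)) = Icc 0 1 := by
  simp [cubeFace]

theorem convex_cubeFace (J : Finset (Fin n)) : Convex ℝ (cubeFace J) := by
  refine (convex_Icc 0 1).inter ?_
  simp only [ofPred_forall]
  exact convex_iInter₂ fun j _ =>
    convex_hyperplane (LinearMap.proj (R := ℝ) (φ := fun _ : Fin n => ℝ) j).isLinear 1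

theorem isExtreme_cubeFace (J : Finset (Fin n)) : IsExtreme ℝ (Icc 0 1) (cubeFace J) := by
  refine ⟨inter_subset_left, fun x hx y hy z hz ⟨a, b, ha, hb, hab, hxyz⟩ => ⟨hx, fun j hj => ?_⟩⟩
  have key : a * x j + b * y j = 1 := by simpa [← hxyz] using hz.2 j hj
  have hx1 : x j ≤ 1 := hx.2 j
  have hy1 : y j ≤ 1 := hy.2 j
  have hxj : a * (1 - x j) = 0 := by
    nlinarith [mul_nonneg ha.le (sub_nonneg.2 hx1), mul_nonneg hb.le (sub_nonneg.2 hy1)]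
  linarith [(mul_eq_zero.1 hxj).resolve_left ha.ne']

theorem convexHull_inter_cubeFace {U : Set (Fin n → ℝ)} (hU : U ⊆ Icc 0 1)
    (J : Finset (Fin n)) : convexHull ℝ U ∩ cubeFace J = convexHull ℝ (U ∩ cubeFace J) :=
  (isExtreme_cubeFace J).convexHull_inter_eq (convex_Icc 0 1) (convex_cubeFace J) hU

theorem mk_one_mem_faceCone {J : Finset (Fin n)} {x : Fin n → ℝ} :
    (x, 1) ∈ faceCone J ↔ x ∈ cubeFace J := by
  simp [faceCone, cubeFace, Pi.le_def, forall_and, and_assoc]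

theorem faceCone_anti {J J' : Finset (Fin n)} (hJ : J ⊆ J') : faceCone J' ⊆ faceCone J :=
  fun _ hp => ⟨hp.1, fun l => ⟨(hp.2 l).1, (hp.2 l).2.1, fun hl => (hp.2 l).2.2 (hJ hl)⟩⟩

theorem add_mem_faceCone {J : Finset (Fin n)} {p q : (Fin n → ℝ) × ℝ} (hp : p ∈ faceCone J)
    (hq : q ∈ faceCone J) : p + q ∈ faceCone J := by
  refine ⟨add_nonneg hp.1 hq.1, fun l => ⟨?_, ?_, fun hl => ?_⟩⟩
  · exact add_nonneg (hp.2 l).1 (hq.2 l).1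
  · exact add_le_add (hp.2 l).2.1 (hq.2 l).2.1
  · simp [(hp.2 l).2.2 hl, (hq.2 l).2.2 hl]

def coordDual (l : Fin n) : Module.Dual ℝ ((Fin n → ℝ) × ℝ) :=
  LinearMap.proj l ∘ₗ LinearMap.fst ℝ _ ℝ

def heightDual : Module.Dual ℝ ((Fin n → ℝ) × ℝ) := LinearMap.snd ℝ _ ℝ

@[simp]
theorem coordDual_apply (l : Fin n) (p : (Fin n → ℝ) × ℝ) : coordDual l p = p.1 l := rfl

@[simp]
theorem heightDual_apply (p : (Fin n → ℝ) × ℝ) : heightDual p = p.2 := rfl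

theorem faceCone_eq_polyCone_of_notMem {J : Finset (Fin n)} {l₀ : Fin n} (hl₀ : l₀ ∉ J) :
    faceCone J = polyCone
      (List.ofFn (fun l => coordDual l - (if l ∈ J then 1 else 0 : ℝ) • heightDual) ++
        List.ofFn (fun l => heightDual - coordDual l)) := by
  ext ⟨x, μ⟩
  simp only [polyCone, faceCone, List.mem_append, or_imp, forall_and, List.forall_mem_ofFn_iff,
    mem_ofPred_eq, ite_smul, one_smul, zero_smul, LinearMap.sub_apply, coordDual_apply,
    heightDual_apply, sub_nonneg]
  constructor
  · rintro ⟨-, h0, hup, hJ⟩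
    refine ⟨fun l => ?_, hup⟩
    split_ifs with hl
    exacts [(hJ l hl).ge, h0 l]
  · rintro ⟨hlow, hup⟩
    have hμ : 0 ≤ μ := (show 0 ≤ x l₀ by simpa [hl₀] using hlow l₀).trans (hup l₀)
    have hlowJ : ∀ l ∈ J, μ ≤ x l := fun l hl => by simpa [hl] using hlow l
    refine ⟨hμ, fun l => ?_, hup, fun l hl => (hup l).antisymm (hlowJ l hl)⟩
    by_cases hl : l ∈ J
    exacts [hμ.trans (hlowJ l hl), by simpa [hl] using hlow l]

theorem faceCone_univ_eq_polyCone :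
    faceCone (Finset.univ : Finset (Fin n)) = polyCone
      (List.ofFn (fun l => coordDual l - heightDual) ++
        [(n : ℝ) • heightDual - ∑ l, coordDual l, heightDual]) := by
  ext ⟨x, μ⟩
  simp only [polyCone, faceCone, List.mem_append, or_imp, forall_and, List.forall_mem_ofFn_iff,
    Finset.mem_univ, forall_const, mem_ofPred_eq, LinearMap.sub_apply, coordDual_apply,
    heightDual_apply, sub_nonneg, List.mem_cons, List.not_mem_nil, or_false,
    LinearMap.smul_apply, smul_eq_mul, LinearMap.coe_sum, Finset.sum_apply, forall_eq]
  constructor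
  · rintro ⟨hμ, -, -, h⟩
    simp [h, hμ]
  · rintro ⟨hlow, hsum, hμ⟩
    have h : ∀ l, x l = μ := by
      have hle : ∑ l, (x l - μ) ≤ 0 := by simpa [Finset.sum_sub_distrib] using hsum
      have := (Finset.sum_eq_zero_iff_of_nonneg fun l _ => sub_nonneg.2 (hlow l)).1
        (hle.antisymm (Finset.sum_nonneg fun l _ => sub_nonneg.2 (hlow l)))
      exact fun l => sub_eq_zero.1 (this l (Finset.mem_univ l))
    exact ⟨hμ, fun l => h l ▸ hμ, fun l => (h l).le, h⟩

theorem hasConeEF_faceCone (hn : 2 ≤ n) (J : Finset (Fin n)) :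
    HasConeEF _ (2 * n) (faceCone J) := by
  by_cases hJ : ∃ l₀, l₀ ∉ J
  · obtain ⟨l₀, hl₀⟩ := hJ
    rw [faceCone_eq_polyCone_of_notMem hl₀]
    exact HasConeEF.of_polyCone (by simp only [List.length_append, List.length_ofFn]; omega)
  · obtain rfl : J = Finset.univ := Finset.eq_univ_iff_forall.2 (by simpa using hJ)
    rw [faceCone_univ_eq_polyCone]
    exact HasConeEF.of_polyCone (by simp only [List.length_append, List.length_ofFn,
      List.length_cons, List.length_nil]; omega)

theorem HasConeEF.mem_smul_slice {s : ℕ} {K : Set ((Fin n → ℝ) × ℝ)} (hK : HasConeEF _ s K)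
    {J : Finset (Fin n)} (hKJ : K ⊆ faceCone J) (hne : {x | (x, (1 : ℝ)) ∈ K}.Nonempty)
    {p : (Fin n → ℝ) × ℝ} (hp : p ∈ K) : p.1 ∈ p.2 • {x | (x, (1 : ℝ)) ∈ K} := by
  obtain ⟨ht, hx⟩ := hKJ hp
  rcases ht.eq_or_lt with ht | ht
  · rw [← ht, zero_smul_set hne, mem_zero]
    refine funext fun l => le_antisymm ?_ (hx l).1
    simpa [← ht] using (hx l).2.1
  · refine ⟨p.2⁻¹ • p.1, ?_, smul_inv_smul₀ ht.ne' p.1⟩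
    have hp' : p.2⁻¹ • p = (p.2⁻¹ • p.1, 1) := by ext <;> simp [ht.ne']
    show (_, _) ∈ K
    exact hp' ▸ hK.smul_mem (inv_nonneg.2 ht.le) hp

end Face

section FaceEF

variable {n : ℕ}

def HasFaceEF (J : Finset (Fin n)) (s : ℕ) (X : Set (Fin n → ℝ)) : Prop :=
  ∃ K, HasConeEF _ s K ∧ K ⊆ faceCone J ∧ X = {x | (x, (1 : ℝ)) ∈ K}

theorem hasFaceEF_cubeFace (hn : 2 ≤ n) (J : Finset (Fin n)) :
    HasFaceEF J (2 * n) (cubeFace J) :=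
  ⟨faceCone J, hasConeEF_faceCone hn J, subset_rfl, by ext; exact mk_one_mem_faceCone.symm⟩

namespace HasFaceEF

variable {J : Finset (Fin n)} {s s₁ s₂ : ℕ} {X X₁ X₂ : Set (Fin n → ℝ)}

theorem of_subset {J' : Finset (Fin n)} (hJ : J ⊆ J') (h : HasFaceEF J' s X) :
    HasFaceEF J s X := by
  obtain ⟨K, hK, hKJ, rfl⟩ := h
  exact ⟨K, hK, hKJ.trans (faceCone_anti hJ), rfl⟩

theorem inter (h₁ : HasFaceEF J s₁ X₁) (h₂ : HasFaceEF J s₂ X₂) :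
    HasFaceEF J (s₁ + s₂) (X₁ ∩ X₂) := by
  obtain ⟨K₁, hK₁, hK₁J, rfl⟩ := h₁
  obtain ⟨K₂, hK₂, -, rfl⟩ := h₂
  exact ⟨K₁ ∩ K₂, hK₁.inter hK₂, inter_subset_left.trans hK₁J, rfl⟩

theorem isEF (h : HasFaceEF J s X) (hX : X.Nonempty) : IsEF X s := by
  obtain ⟨K, hK, -, rfl⟩ := h
  exact hK.isEF_slice hX

end HasFaceEF

theorem HasFaceEF.convexHull_union {J : Finset (Fin n)} {s₁ s₂ : ℕ}
    {X₁ X₂ : Set (Fin n → ℝ)} (h₁ : HasFaceEF J s₁ X₁) (h₂ : HasFaceEF J s₂ X₂)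
    (hX₁ : X₁.Nonempty) (hX₂ : X₂.Nonempty) :
    HasFaceEF J (s₁ + s₂) (convexHull ℝ (X₁ ∪ X₂)) := by
  obtain ⟨K₁, hK₁, hK₁J, rfl⟩ := h₁
  obtain ⟨K₂, hK₂, hK₂J, rfl⟩ := h₂
  refine ⟨K₁ + K₂, hK₁.add hK₂, ?_, Subset.antisymm ?_ ?_⟩
  · rintro _ ⟨p, hp, q, hq, rfl⟩
    exact add_mem_faceCone (hK₁J hp) (hK₂J hq)
  · refine convexHull_min (union_subset ?_ ?_) ?_
    · exact fun x hx => ⟨_, hx, 0, hK₂.zero_mem, add_zero _⟩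
    · exact fun x hx => ⟨0, hK₁.zero_mem, _, hx, zero_add _⟩
    · intro x hx y hy a b ha hb hab
      simpa [hab] using (hK₁.add hK₂).convex hx hy ha hb hab
  · rintro x ⟨p, hp, q, hq, hpq⟩
    obtain ⟨y₁, hy₁, hpy⟩ := hK₁.mem_smul_slice hK₁J hX₁ hp
    obtain ⟨y₂, hy₂, hqy⟩ := hK₂.mem_smul_slice hK₂J hX₂ hq
    beta_reduce at hpy hqy hpq
    have hx : p.2 • y₁ + q.2 • y₂ = x := by rw [hpy, hqy]; exact congrArg Prod.fst hpq
    rw [← hx]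
    exact convex_convexHull ℝ _ (subset_convexHull ℝ _ (mem_union_left _ hy₁))
      (subset_convexHull ℝ _ (mem_union_right _ hy₂)) (hK₁J hp).1 (hK₂J hq).1
      (congrArg Prod.snd hpq)

theorem hasFaceEF_app {Q : Set (Fin n → ℝ)} {s : ℕ} (hQ : ∀ J, HasFaceEF J s (Q ∩ cubeFace J))
    (hQc : Convex ℝ Q) (hQI : Q ⊆ Icc 0 1) (h1 : (1 : Fin n → ℝ) ∈ Q) {ψ : Fml n}
    (hψ : ψ.IsMonotone) (J : Finset (Fin n)) :
    HasFaceEF J (ψ.size * s) (ψ.app Q ∩ cubeFace J) := by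
  induction ψ generalizing J with
  | pos i =>
    have hpos : (Fml.pos i).app Q ∩ cubeFace J = Q ∩ cubeFace (insert i J) := by
      ext x
      simp only [Fml.app, cubeFace, mem_inter_iff, mem_ofPred_eq, Finset.forall_mem_insert]
      tauto
    rw [hpos, Fml.size, one_mul]
    exact (hQ _).of_subset (Finset.subset_insert i J)
  | neg i => exact hψ.elim
  | and φ ψ ihφ ihψ =>
    rw [Fml.app, inter_inter_distrib_right, Fml.size, add_mul]
    exact (ihφ hψ.1 J).inter (ihψ hψ.2 J)
  | or φ ψ ihφ ihψ =>
    have hsub : φ.app Q ∪ ψ.app Q ⊆ Icc 0 1 :=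
      union_subset ((φ.app_subset hQc).trans hQI) ((ψ.app_subset hQc).trans hQI)
    rw [Fml.app, convexHull_inter_cubeFace hsub, union_inter_distrib_right, Fml.size, add_mul]
    exact (ihφ hψ.1 J).convexHull_union (ihψ hψ.2 J)
      ⟨1, Fml.one_mem_app hψ.1 h1, one_mem_cubeFace J⟩
      ⟨1, Fml.one_mem_app hψ.2 h1, one_mem_cubeFace J⟩

theorem hasFaceEF_iterApp (hn : 2 ≤ n) {ψ : Fml n} (hψ : ψ.IsMonotone) (k : ℕ)
    (J : Finset (Fin n)) :
    HasFaceEF J (ψ.size ^ k * (2 * n)) (ψ.iterApp k (Icc 0 1) ∩ cubeFace J) := by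
  induction k generalizing J with
  | zero =>
    rw [pow_zero, one_mul, Fml.iterApp, inter_eq_right.2 (cubeFace_subset_Icc J)]
    exact hasFaceEF_cubeFace hn J
  | succ k ih =>
    rw [pow_succ, mul_comm _ ψ.size, mul_assoc]
    exact hasFaceEF_app ih (ψ.convex_iterApp (convex_Icc 0 1) k)
      (ψ.iterApp_subset (convex_Icc 0 1) k)
      (Fml.one_mem_iterApp hψ (right_mem_Icc.2 zero_le_one) k) hψ J

end FaceEF

theorem xc_le_of_isEF {n s : ℕ} {P : Set (Fin n → ℝ)} (h : IsEF P s) : xc P ≤ s :=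
  Nat.sInf_le h

theorem isEF_zero_of_subsingleton {n : ℕ} {P : Set (Fin n → ℝ)} (hP : P.Subsingleton)
    (hne : P.Nonempty) : IsEF P 0 := by
  obtain ⟨t, ht⟩ := hne
  refine ⟨0, 0, 0, t, 0, ?_⟩
  rw [hP.eq_singleton_of_mem ht]
  ext x
  simp [eq_comm]

theorem subsingleton_iterApp_canonCNF {m : ℕ} (hm : 0 < m) (hn : 0 < 1)
    (A : Matrix (Fin m) (Fin 1) ℝ) (hA01 : ∀ i j, A i j = 0 ∨ A i j = 1)
    (hrow : ∀ i, ∃ j, A i j = 1) {k : ℕ} (hk : 1 ≤ k) :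
    ((canonCNF hn A).iterApp k (Icc 0 1)).Subsingleton := by
  suffices h : ∀ x ∈ (canonCNF hn A).iterApp k (Icc 0 1), x = 1 from
    fun x hx y hy => (h x hx).trans (h y hy).symm
  intro x hx
  have hpitch : PitchLE (fun _ : Fin 1 => (1 : ℝ)) 1 k := fun J _ hJ => by
    simpa using hk.trans hJ
  have hvalid : ∀ y ∈ coverPoints A, (1 : ℝ) ≤ ∑ l, (fun _ => (1 : ℝ)) l * y l := by
    rintro y ⟨hy01, hyA⟩
    have := hyA ⟨0, hm⟩
    rcases hy01 0 with h | h <;> simp_all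
  have h1 := le_sum_of_mem_iterApp_canonCNF hn A hA01 hrow k (fun _ => zero_le_one)
    hpitch hvalid x hx
  have hx1 := ((canonCNF hn A).iterApp_subset (convex_Icc 0 1) k hx).2 0
  exact funext fun l => Subsingleton.elim l 0 ▸ le_antisymm hx1 (by simpa using h1)

theorem stmt13 {m n : ℕ} (hm : 0 < m) (hn : 0 < n) (A : Matrix (Fin m) (Fin n) ℝ)
    (hA01 : ∀ i j, A i j = 0 ∨ A i j = 1) (hrow : ∀ i, ∃ j, A i j = 1)
    (S : Set (Fin n → ℝ))
    (hS : S = {x | x ∈ CubeVerts n ∧ ∀ i, 1 ≤ ∑ j, A i j * x j})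
    (k : ℕ) (hk : 1 ≤ k) :
    (∀ (c : Fin n → ℝ) (δ : ℝ), (∀ i, 0 ≤ c i) → 0 ≤ δ → PitchLE c δ k →
        (∀ x ∈ S, δ ≤ ∑ i, c i * x i) →
        ∀ x ∈ (canonCNF hn A).iterApp k (Set.Icc (0 : Fin n → ℝ) 1),
          δ ≤ ∑ i, c i * x i) ∧
      (((canonCNF hn A).iterApp k (Set.Icc (0 : Fin n → ℝ) 1)).Nonempty →
        xc ((canonCNF hn A).iterApp k (Set.Icc (0 : Fin n → ℝ) 1)) ≤
          2 * n * (m * n) ^ k) := by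
  subst hS
  refine ⟨fun c δ hc _ hp hvalid => le_sum_of_mem_iterApp_canonCNF hn A hA01 hrow k hc hp hvalid,
    fun hne => ?_⟩
  rcases (Nat.one_le_of_lt hn).eq_or_lt with rfl | hn2
  · exact (xc_le_of_isEF (isEF_zero_of_subsingleton
      (subsingleton_iterApp_canonCNF hm hn A hA01 hrow hk) hne)).trans (Nat.zero_le _)
  · have hEF := hasFaceEF_iterApp hn2 (isMonotone_canonCNF hn A) k ∅
    rw [cubeFace_empty, inter_eq_left.2 ((canonCNF hn A).iterApp_subset (convex_Icc 0 1) k)]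
      at hEF
    calc xc _ ≤ (canonCNF hn A).size ^ k * (2 * n) := xc_le_of_isEF (hEF.isEF hne)
      _ ≤ (m * n) ^ k * (2 * n) := by gcongr; exact size_canonCNF_le hn A hm
      _ = 2 * n * (m * n) ^ k := mul_comm _ _
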